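/- For every positive integer n, the tree T_n obtained from two disjoint stars K_{1,n} by subdividing every edge once and then adding an edge joining the two centers satisfies: the minimum cardinality of a maximal open packing of T_n is 2, while the maximum cardinality of an open packing of T_n is 2n+2. -/

import Mathlib

open SimpleGraph

/-- The open neighborhood graph of `G`: distinct vertices are adjacent iff they have a
common neighbor in `G`. -/
def ong {V : Type*} (G : SimpleGraph V) : SimpleGraph V where
  Adj u v := u ≠ v ∧ ∃ w, G.Adj u w ∧ G.Adj v w
  symm := by constructor; rintro u v ⟨h, w, h1, h2⟩; exact ⟨h.symm, w, h2, h1⟩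
  loopless := by constructor; rintro u ⟨h, -⟩; exact h rfl

/-- A set of vertices is an open packing if no two distinct members have a common neighbor. -/
def IsOpenPacking {V : Type*} (G : SimpleGraph V) (P : Set V) : Prop :=
  ∀ ⦃u⦄, u ∈ P → ∀ ⦃v⦄, v ∈ P → u ≠ v → ∀ w, ¬(G.Adj u w ∧ G.Adj v w)

/-- An independent set of vertices. -/
def IsIndep {V : Type*} (G : SimpleGraph V) (s : Set V) : Prop :=
  s.Pairwise fun u v => ¬ G.Adj u v

/-- All maximal open packings of `G` have the same cardinality. -/
def InU {V : Type*} (G : SimpleGraph V) : Prop :=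
  ∀ P Q : Set V, Maximal (IsOpenPacking G) P → Maximal (IsOpenPacking G) Q →
    P.ncard = Q.ncard

/-- All maximal independent sets of `G` have the same cardinality. -/
def WellCovered {V : Type*} (G : SimpleGraph V) : Prop :=
  ∀ P Q : Set V, Maximal (IsIndep G) P → Maximal (IsIndep G) Q → P.ncard = Q.ncard

/-- A leaf is a vertex with exactly one neighbor. -/
def IsLeaf {V : Type*} (G : SimpleGraph V) (v : V) : Prop :=
  ∃ u, G.neighborSet v = {u}

/-- A support vertex is one adjacent to a leaf. -/
def IsSupport {V : Type*} (G : SimpleGraph V) (s : V) : Prop :=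
  ∃ l, G.neighborSet l = {s}

/-- The tree `T n`: two centers (the `Sum.inl` part), joined to each other; center `i` is
joined to the `n` middle vertices `Sum.inr (Sum.inl (i, j))`, and middle vertex `(i, j)` is
joined to the leaf `Sum.inr (Sum.inr (i, j))`. -/
def Tgraph (n : ℕ) : SimpleGraph (Fin 2 ⊕ (Fin 2 × Fin n ⊕ Fin 2 × Fin n)) :=
  SimpleGraph.fromRel (fun a b =>
    (a = Sum.inl 0 ∧ b = Sum.inl 1) ∨
    (∃ i j, a = Sum.inl i ∧ b = Sum.inr (Sum.inl (i, j))) ∨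
    (∃ i j, a = Sum.inr (Sum.inl (i, j)) ∧ b = Sum.inr (Sum.inr (i, j))))

open SimpleGraph

/-!
An open packing meets every neighbourhood in at most one vertex. Every vertex of `T_n` other than
a leaf is adjacent to a centre, so an open packing has at most one vertex in each centre's
neighbourhood plus at most the `2n` leaves; all leaves together with one middle vertex on each
side attain `2n + 2`. The two centres form a maximal open packing, since every other vertex
shares a neighbour with one of them. No single vertex is a maximal open packing, since each
vertex can be paired with one sharing no neighbour with it: the other centre, or the other end
of its pendant edge.
-/

section OpenPacking

variable {V : Type*} {G : SimpleGraph V} {P : Set V}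

theorem isOpenPacking_pair {a b : V} (h : ∀ w, ¬(G.Adj a w ∧ G.Adj b w)) :
    IsOpenPacking G {a, b} := by
  rintro u (rfl | rfl) v (rfl | rfl) huv w
  · exact absurd rfl huv
  · exact h w
  · exact fun hc => h w hc.symm
  · exact absurd rfl huv

theorem isOpenPacking_of_forall_exists (h : ∀ w, ∃ x, ∀ v ∈ P, G.Adj v w → v = x) :
    IsOpenPacking G P := by
  intro u hu v hv huv w ⟨huw, hvw⟩
  obtain ⟨x, hx⟩ := h w
  exact huv ((hx u hu huw).trans (hx v hv hvw).symm)

theorem IsOpenPacking.maximal (hP : IsOpenPacking G P)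
    (h : ∀ v ∉ P, ∃ u ∈ P, ∃ w, G.Adj u w ∧ G.Adj v w) : Maximal (IsOpenPacking G) P := by
  refine ⟨hP, fun Q hQ hPQ v hv => by_contra fun hvP => ?_⟩
  obtain ⟨u, hu, w, huw⟩ := h v hvP
  exact hQ (hPQ hu) hv (ne_of_mem_of_not_mem hu hvP) w huw

/-- Distinct members of an open packing have distinct neighbours, so choosing a neighbour in `S`
injects the part of `P` outside `L` into `S`. -/
theorem IsOpenPacking.ncard_le (hP : IsOpenPacking G P) (S : Finset V) {L : Set V}
    (hL : L.Finite) (hcov : ∀ v ∉ L, ∃ w ∈ S, G.Adj v w) : P.ncard ≤ S.card + L.ncard := by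
  choose! f hfS hfadj using hcov
  calc P.ncard ≤ (P \ L).ncard + L.ncard := Set.ncard_le_ncard_sdiff_add_ncard _ _ hL
    _ ≤ S.card + L.ncard := by
      gcongr
      rw [← Set.ncard_coe_finset]
      refine Set.ncard_le_ncard_of_injOn f (fun v hv => hfS v hv.2) fun u hu v hv huv => ?_
      by_contra hne
      exact hP hu.1 hv.1 hne (f u) ⟨hfadj u hu.2, huv ▸ hfadj v hv.2⟩

theorem IsOpenPacking.two_le_ncard_of_maximal [Finite V] [Nonempty V]
    (hpartner : ∀ a, ∃ b ≠ a, ∀ w, ¬(G.Adj a w ∧ G.Adj b w))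
    (hP : Maximal (IsOpenPacking G) P) : 2 ≤ P.ncard := by
  by_contra! hlt
  have hsingle : P.Subsingleton := Set.ncard_le_one_iff_subsingleton.1 (by omega)
  obtain ⟨a, hPa⟩ : ∃ a, P ⊆ {a} := by
    rcases hsingle.eq_empty_or_singleton with h | ⟨a, h⟩
    · exact ⟨Classical.arbitrary V, h ▸ Set.empty_subset _⟩
    · exact ⟨a, h.subset⟩
  obtain ⟨b, hba, hab⟩ := hpartner a
  have hsub : ({a, b} : Set V) ⊆ P :=
    hP.2 (isOpenPacking_pair hab) (hPa.trans (Set.singleton_subset_iff.2 (Set.mem_insert _ _)))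
  exact hba (hPa (hsub (Set.mem_insert_of_mem _ rfl)))

end OpenPacking

namespace Tgraph

variable {n : ℕ}

@[simp] theorem adj_center_center (i i' : Fin 2) :
    (Tgraph n).Adj (Sum.inl i) (Sum.inl i') ↔ i ≠ i' := by
  fin_cases i <;> fin_cases i' <;> simp [Tgraph]

@[simp] theorem adj_center_middle (i : Fin 2) (p : Fin 2 × Fin n) :
    (Tgraph n).Adj (Sum.inl i) (Sum.inr (Sum.inl p)) ↔ p.1 = i := by
  obtain ⟨i', j⟩ := p; simp [Tgraph]; fin_cases i <;> fin_cases i' <;> simp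

@[simp] theorem not_adj_center_leaf (i : Fin 2) (p : Fin 2 × Fin n) :
    ¬ (Tgraph n).Adj (Sum.inl i) (Sum.inr (Sum.inr p)) := by
  simp [Tgraph]

@[simp] theorem not_adj_middle_middle (p q : Fin 2 × Fin n) :
    ¬ (Tgraph n).Adj (Sum.inr (Sum.inl p)) (Sum.inr (Sum.inl q)) := by
  simp [Tgraph]

@[simp] theorem adj_middle_leaf (p q : Fin 2 × Fin n) :
    (Tgraph n).Adj (Sum.inr (Sum.inl p)) (Sum.inr (Sum.inr q)) ↔ p = q := by
  obtain ⟨i, j⟩ := p; obtain ⟨i', j'⟩ := q; simp [Tgraph]; fin_cases i <;> fin_cases i' <;> simp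

@[simp] theorem not_adj_leaf_leaf (p q : Fin 2 × Fin n) :
    ¬ (Tgraph n).Adj (Sum.inr (Sum.inr p)) (Sum.inr (Sum.inr q)) := by
  simp [Tgraph]

@[simp] theorem adj_middle_center (i : Fin 2) (p : Fin 2 × Fin n) :
    (Tgraph n).Adj (Sum.inr (Sum.inl p)) (Sum.inl i) ↔ p.1 = i := by
  rw [adj_comm]; simp

@[simp] theorem not_adj_leaf_center (i : Fin 2) (p : Fin 2 × Fin n) :
    ¬ (Tgraph n).Adj (Sum.inr (Sum.inr p)) (Sum.inl i) := by
  rw [adj_comm]; simp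

@[simp] theorem adj_leaf_middle (p q : Fin 2 × Fin n) :
    (Tgraph n).Adj (Sum.inr (Sum.inr p)) (Sum.inr (Sum.inl q)) ↔ q = p := by
  rw [adj_comm]; simp

abbrev Vertex (n : ℕ) : Type := Fin 2 ⊕ (Fin 2 × Fin n ⊕ Fin 2 × Fin n)

def leaves (n : ℕ) : Set (Vertex n) := Set.range fun p => Sum.inr (Sum.inr p)

theorem ncard_leaves : (leaves n).ncard = 2 * n := by
  rw [leaves, Set.ncard_range_of_injective fun p q h => by simpa using h]
  simp

def centers : Set (Vertex n) := {Sum.inl 0, Sum.inl 1}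

theorem maximal_isOpenPacking_centers : Maximal (IsOpenPacking (Tgraph n)) centers := by
  refine (isOpenPacking_pair fun w => ?_).maximal ?_
  · rcases w with k | p | p <;> simp <;> omega
  · rintro (k | ⟨i, j⟩ | ⟨i, j⟩) hv
    · fin_cases k <;> simp at hv
    · exact ⟨Sum.inl (1 - i), by fin_cases i <;> simp, Sum.inl i, by
        fin_cases i <;> simp⟩
    · exact ⟨Sum.inl i, by fin_cases i <;> simp, Sum.inr (Sum.inl (i, j)), by simp⟩

theorem exists_partner (a : Vertex n) :
    ∃ b ≠ a, ∀ w, ¬((Tgraph n).Adj a w ∧ (Tgraph n).Adj b w) := by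
  rcases a with i | p | p
  · refine ⟨Sum.inl (1 - i), by fin_cases i <;> simp, ?_⟩
    rintro (k | q | q) <;> fin_cases i <;> simp <;> omega
  · exact ⟨Sum.inr (Sum.inr p), by simp, by rintro (k | q | q) <;> simp⟩
  · exact ⟨Sum.inr (Sum.inl p), by simp, by rintro (k | q | q) <;> simp⟩

def leavesWithMiddles (z : Fin n) : Set (Vertex n) :=
  Set.range (Sum.elim (fun p => Sum.inr (Sum.inr p)) fun i => Sum.inr (Sum.inl (i, z)))

theorem isOpenPacking_leavesWithMiddles (z : Fin n) :
    IsOpenPacking (Tgraph n) (leavesWithMiddles z) := by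
  refine isOpenPacking_of_forall_exists fun w => ?_
  rcases w with i | p | p
  · exact ⟨Sum.inr (Sum.inl (i, z)), by rintro _ ⟨p | i', rfl⟩ <;> simp⟩
  · exact ⟨Sum.inr (Sum.inr p), by rintro _ ⟨q | i', rfl⟩ <;> simp [eq_comm]⟩
  · exact ⟨Sum.inr (Sum.inl p), by rintro _ ⟨q | i', rfl⟩ <;> simp_all⟩

theorem ncard_leavesWithMiddles (z : Fin n) : (leavesWithMiddles z).ncard = 2 * n + 2 := by
  rw [leavesWithMiddles, Set.ncard_range_of_injective]
  · simp
  · rintro (p | i) (q | i') h <;> simp at h <;> simp [h]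

theorem ncard_le_of_isOpenPacking {P : Set (Vertex n)} (hP : IsOpenPacking (Tgraph n) P) :
    P.ncard ≤ 2 * n + 2 := by
  have hcov : ∀ v ∉ leaves n, ∃ w ∈ ({Sum.inl 0, Sum.inl 1} : Finset (Vertex n)),
      (Tgraph n).Adj v w := by
    rintro (i | ⟨i, j⟩ | p) hv
    · exact ⟨Sum.inl (1 - i), by fin_cases i <;> simp⟩
    · exact ⟨Sum.inl i, by fin_cases i <;> simp⟩
    · exact absurd ⟨p, rfl⟩ hv
  have := hP.ncard_le _ (Set.toFinite _) hcov
  rw [ncard_leaves, Finset.card_pair (by simp)] at this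
  omega

end Tgraph

theorem stmt7 (n : ℕ) (hn : 1 ≤ n) :
    (∃ P, Maximal (IsOpenPacking (Tgraph n)) P ∧ P.ncard = 2) ∧
    (∀ P, Maximal (IsOpenPacking (Tgraph n)) P → 2 ≤ P.ncard) ∧
    (∃ P, IsOpenPacking (Tgraph n) P ∧ P.ncard = 2 * n + 2) ∧
    (∀ P, IsOpenPacking (Tgraph n) P → P.ncard ≤ 2 * n + 2) :=
  ⟨⟨Tgraph.centers, Tgraph.maximal_isOpenPacking_centers, Set.ncard_pair (by simp)⟩,
    fun _ hP => IsOpenPacking.two_le_ncard_of_maximal Tgraph.exists_partner hP,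
    ⟨_, Tgraph.isOpenPacking_leavesWithMiddles ⟨0, hn⟩, Tgraph.ncard_leavesWithMiddles _⟩,
    fun _ => Tgraph.ncard_le_of_isOpenPacking⟩
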